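/- Let α > 0, let μ : ℝ → ℝ be continuous and nonnegative, let b₁ > 0 be a constant, and let φ : [0,∞) → ℝ. Let n be the explicit characteristic solution of the McKendrick equation with boundary condition n(0,t) = b₁·n(α,t) and initial data φ, and set r = b₁·exp(−∫₀^α μ(s) ds) (the Lotka growth rate). Then for every a ≥ 0 and every t ≥ a, n(a, t + α) = r · n(a,t); consequently n(a, t + sα) = r^s · n(a,t) for every natural number s. -/
import Mathlib


open MeasureTheory Real Set Filter

/-- with Lotka growth rate `r = b₁·exp(−∫₀^α μ(s) ds)`, the
characteristic solution of the McKendrick equation with one reproductive age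
class satisfies `n(a, t+α) = r·n(a,t)` for all `t ≥ a`, and consequently
`n(a, t+sα) = r^s·n(a,t)` for every natural number `s`. -/
theorem mckendrick_one_age_class_geometric_growth
    (α : ℝ) (hα : 0 < α)
    (μ : ℝ → ℝ) (hμc : Continuous μ) (hμ0 : ∀ x, 0 ≤ μ x)
    (b₁ : ℝ) (hb₁ : 0 < b₁)
    (φ : ℝ → ℝ)
    (n : ℝ → ℝ → ℝ)
    (hn₁ : ∀ a t : ℝ, 0 ≤ t → t < a →
      n a t = φ (a - t) * Real.exp (-(∫ s in (0:ℝ)..t, μ (s + a - t))))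
    (hn₂ : ∀ a t : ℝ, 0 ≤ a → a ≤ t →
      ∀ m : ℕ, (m : ℤ) = ⌊(t - a) / α⌋ + 1 →
      n a t = b₁ ^ m * φ ((m : ℝ) * α + a - t) *
        Real.exp (-(∫ s in (0:ℝ)..(t - a - ((m : ℝ) - 1) * α),
          μ (s + (m : ℝ) * α + a - t))) *
        Real.exp (-(((m : ℝ) - 1) * ∫ s in (0:ℝ)..α, μ s)) *
        Real.exp (-(∫ s in (0:ℝ)..a, μ s)))
    (r : ℝ) (hr : r = b₁ * Real.exp (-(∫ s in (0:ℝ)..α, μ s))) :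
    ∀ a : ℝ, 0 ≤ a → ∀ t : ℝ, a ≤ t →
      n a (t + α) = r * n a t ∧
      ∀ s : ℕ, n a (t + (s : ℝ) * α) = r ^ s * n a t := by
  intro a ha t hat
  have key : ∀ u : ℝ, a ≤ u → n a (u + α) = r * n a u := by
    intro u hau
    have hu0 : (0:ℝ) ≤ (u - a)/α := div_nonneg (by linarith) hα.le
    set m0 : ℤ := ⌊(u - a)/α⌋ with hm0
    have hm0nn : 0 ≤ m0 := Int.floor_nonneg.mpr hu0
    obtain ⟨m, hm⟩ : ∃ m : ℕ, (m : ℤ) = m0 + 1 :=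
      ⟨(m0+1).toNat, Int.toNat_of_nonneg (by omega)⟩
    have h1 := hn₂ a u ha hau m hm
    have hfloor' : ⌊(u + α - a)/α⌋ = m0 + 1 := by
      have hdiv : (u + α - a)/α = (u - a)/α + 1 := by field_simp; ring
      rw [hdiv, Int.floor_add_one, hm0]
    have h2 := hn₂ a (u + α) ha (by linarith) (m+1) (by rw [hfloor']; push_cast; omega)
    have hC : ∀ s : ℝ, s + ((m+1 : ℕ) : ℝ) * α + a - (u + α) = s + (m : ℝ) * α + a - u := by
      intro s; push_cast; ring
    have hX : u + α - a - (((m+1 : ℕ) : ℝ) - 1) * α = u - a - ((m : ℝ) - 1) * α := by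
      push_cast; ring
    have hA : ((m+1 : ℕ) : ℝ) * α + a - (u + α) = (m : ℝ) * α + a - u := by
      push_cast; ring
    rw [hX, hA] at h2
    simp only [hC] at h2
    rw [h2, h1, hr]
    have hE : Real.exp (-((((m:ℕ)+1 : ℕ) : ℝ) - 1) * (∫ s in (0:ℝ)..α, μ s)) =
        Real.exp (-(∫ s in (0:ℝ)..α, μ s)) * Real.exp (-(((m : ℝ) - 1) * ∫ s in (0:ℝ)..α, μ s)) := by
      rw [← Real.exp_add]; push_cast; ring_nf
    have hE2 : Real.exp (-((((m:ℕ)+1 : ℕ) : ℝ) - 1) * (∫ s in (0:ℝ)..α, μ s)) =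
        Real.exp (-(((((m:ℕ)+1 : ℕ) : ℝ) - 1) * ∫ s in (0:ℝ)..α, μ s)) := by ring_nf
    rw [← hE2, hE, pow_succ]
    ring
  refine ⟨key t hat, ?_⟩
  intro s
  induction s with
  | zero => simp
  | succ k ih =>
      have hk : a ≤ t + (k : ℝ) * α := by
        have : (0:ℝ) ≤ (k : ℝ) * α := by positivity
        linarith
      have := key (t + (k : ℝ) * α) hk
      calc n a (t + ((k+1 : ℕ) : ℝ) * α) = n a ((t + (k : ℝ) * α) + α) := by push_cast; ring_nf
        _ = r * n a (t + (k : ℝ) * α) := this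
        _ = r * (r ^ k * n a t) := by rw [ih]
        _ = r ^ (k+1) * n a t := by ring
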